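/- Let G be a one-dimensional geometric graph on n vertices with positions x(1) ≤ ⋯ ≤ x(n), adjacency given by |x(i) − x(j)| ≤ ρ. If x(n) − x(1) > 3ρ, then G is r-connected if and only if G is r-robust. -/

import Mathlib

open SimpleGraph

variable {V : Type*}

/-- A set `S` is `r`-reachable if some vertex in `S` has at least `r` neighbors outside `S`. -/
def rReachable (G : SimpleGraph V) (r : ℕ) (S : Set V) : Prop :=
  ∃ i ∈ S, r ≤ ((G.neighborSet i) \ S).ncard

/-- A graph is `r`-robust if for every pair of nonempty disjoint vertex subsets,
at least one is `r`-reachable. -/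
def rRobust (G : SimpleGraph V) (r : ℕ) : Prop :=
  ∀ A B : Set V, A.Nonempty → B.Nonempty → Disjoint A B →
    rReachable G r A ∨ rReachable G r B

/-- A graph is `r`-connected if it has more than `r` vertices and removing any set of
fewer than `r` vertices leaves the graph connected. -/
def rConnected [Fintype V] (G : SimpleGraph V) (r : ℕ) : Prop :=
  r < Fintype.card V ∧ ∀ T : Set V, T.ncard < r → (G.induce Tᶜ).Connected

/-- One-dimensional geometric graph: distinct vertices `i`, `j` are adjacent iff
`|x i - x j| ≤ ρ`. -/
def geomGraph {n : ℕ} (x : Fin n → ℝ) (ρ : ℝ) : SimpleGraph (Fin n) :=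
  SimpleGraph.fromRel fun i j => |x i - x j| ≤ ρ

/-!
If `G` is `r`-connected, any two vertices at most `r` apart in the order are adjacent: otherwise
the fewer than `r` vertices strictly between them would separate them. So `G` contains the `r`-th
power of the path, and the spread `3 ρ` then forces `n > 3 r`. In such a graph a nonempty set that
is not `r`-reachable has a member in `[r, 2 r)`, and each of its members away from the ends has more
than `r` of its `2 r` nearest vertices inside the set. Two disjoint such sets `A`, `B` contain
members `u ∈ A`, `v ∈ B` with nothing of `A ∪ B` strictly between them, and the two neighbourhood
counts at `u` and `v` do not fit into the `2 r` positions available to them.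

Conversely, `r`-robustness implies `r`-connectivity in every graph with at least two vertices.
-/
namespace SimpleGraph

variable {G : SimpleGraph V} {r : ℕ}

lemma rReachable.lt_card [Fintype V] {S : Set V} (h : rReachable G r S) :
    r < Fintype.card V := by
  obtain ⟨i, hi, hr⟩ := h
  calc r ≤ (G.neighborSet i \ S).ncard := hr
    _ ≤ Sᶜ.ncard := Set.ncard_le_ncard fun _ hw => hw.2
    _ < (Set.univ : Set V).ncard :=
      Set.ncard_lt_ncard (Set.compl_ssubset_univ.2 ⟨i, hi⟩)
    _ = Fintype.card V := by rw [Set.ncard_univ, Nat.card_eq_fintype_card]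

lemma not_rReachable_of_neighborSet_diff_subset [Finite V] {S T : Set V} (hT : T.ncard < r)
    (hS : ∀ i ∈ S, G.neighborSet i \ S ⊆ T) : ¬ rReachable G r S := by
  rintro ⟨i, hi, hr⟩
  exact (hr.trans (Set.ncard_le_ncard (hS i hi))).not_gt hT

lemma ncard_lt_add_ncard_inter_of_not_rReachable [Finite V] {S W : Set V} {i : V}
    (hS : ¬ rReachable G r S) (hi : i ∈ S) (hW : W ⊆ G.neighborSet i) :
    W.ncard < r + (W ∩ S).ncard := by
  have hout : (W \ S).ncard < r :=
    ((Set.ncard_le_ncard (Set.sdiff_subset_sdiff_left hW)).trans_lt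
      (not_le.1 fun h => hS ⟨i, hi, h⟩))
  have := Set.ncard_inter_add_ncard_sdiff_eq_ncard W S
  omega

/-- If `G.induce Tᶜ` were disconnected, one of its components and the rest of `Tᶜ` would be two
disjoint sets all of whose outside neighbours lie in `T`. -/
lemma rRobust.rConnected [Fintype V] (h : rRobust G r) (hV : 1 < Fintype.card V) :
    rConnected G r := by
  obtain ⟨a, b, hab⟩ := Fintype.exists_pair_of_one_lt_card hV
  have hr : r < Fintype.card V := by
    rcases h {a} {b} (Set.singleton_nonempty a) (Set.singleton_nonempty b)
      (Set.disjoint_singleton.2 hab) with h | h <;> exact h.lt_card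
  refine ⟨hr, fun T hT => ?_⟩
  have hTc : (Tᶜ : Set V).Nonempty := by
    rw [Set.nonempty_compl]
    rintro rfl
    rw [Set.ncard_univ, Nat.card_eq_fintype_card] at hT
    omega
  have := hTc.to_subtype
  refine (connected_iff _).2 ⟨fun u v => ?_, inferInstance⟩
  by_contra huv
  set A : Set V := {w | ∃ hw : w ∈ Tᶜ, (G.induce Tᶜ).Reachable u ⟨w, hw⟩}
  have hA : ∀ i ∈ A, G.neighborSet i \ A ⊆ T := by
    rintro i ⟨hiT, hui⟩ w ⟨hiw, hwA⟩
    by_contra hwT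
    exact hwA ⟨hwT, hui.trans (Adj.reachable (G := G.induce Tᶜ) hiw)⟩
  have hB : ∀ i ∈ Tᶜ \ A, G.neighborSet i \ (Tᶜ \ A) ⊆ T := by
    rintro i ⟨hiT, hiA⟩ w ⟨hiw, hwB⟩
    by_contra hwT
    obtain ⟨_, huw⟩ : w ∈ A := by_contra fun hwA => hwB ⟨hwT, hwA⟩
    exact hiA ⟨hiT, huw.trans (Adj.reachable (G := G.induce Tᶜ) hiw.symm)⟩
  rcases h A (Tᶜ \ A) ⟨u, u.2, by simp⟩ ⟨v, v.2, fun ⟨_, huv'⟩ => huv huv'⟩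
    Set.disjoint_sdiff_right with hAr | hBr
  · exact not_rReachable_of_neighborSet_diff_subset hT hA hAr
  · exact not_rReachable_of_neighborSet_diff_subset hT hB hBr

end SimpleGraph

lemma exists_consecutive_mem {α : Type*} [LinearOrder α] [LocallyFiniteOrder α] {A B : Set α}
    {a b : α} (ha : a ∈ A) (hb : b ∈ B) (hab : a < b) :
    ∃ u ∈ A, ∃ v ∈ B, a ≤ u ∧ u < v ∧ v ≤ b ∧ ∀ w, u < w → w < v → w ∉ A ∧ w ∉ B := by
  obtain ⟨v, ⟨hvB, hav, hvb⟩, hvmin⟩ := Set.exists_min_image {w | w ∈ B ∧ a < w ∧ w ≤ b} id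
    ((Set.finite_Icc a b).subset fun w hw => ⟨hw.2.1.le, hw.2.2⟩) ⟨b, hb, hab, le_rfl⟩
  obtain ⟨u, ⟨huA, hau, huv⟩, humax⟩ := Set.exists_max_image {w | w ∈ A ∧ a ≤ w ∧ w < v} id
    ((Set.finite_Icc a v).subset fun w hw => ⟨hw.2.1, hw.2.2.le⟩) ⟨a, ha, le_rfl, hav⟩
  refine ⟨u, huA, v, hvB, hau, huv, hvb, fun w huw hwv => ⟨fun hwA => ?_, fun hwB => ?_⟩⟩
  · exact (humax w ⟨hwA, hau.trans huw.le, hwv⟩).not_gt huw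
  · exact (hvmin w ⟨hwB, hau.trans_lt huw, hwv.le.trans hvb⟩).not_gt hwv

/-- `G` contains the `r`-th power of the path `0 – 1 – ⋯ – n`. -/
def ContainsPathPow {n : ℕ} (G : SimpleGraph (Fin (n + 1))) (r : ℕ) : Prop :=
  ∀ i j : Fin (n + 1), i ≠ j → (i : ℕ) ≤ j + r → (j : ℕ) ≤ i + r → G.Adj i j

lemma Fin.ncard_preimage_val {n : ℕ} {s : Set ℕ} (hs : s ⊆ Set.Iic n) :
    (Fin.val ⁻¹' s : Set (Fin (n + 1))).ncard = s.ncard :=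
  Set.ncard_preimage_of_injective_subset_range Fin.val_injective
    fun k hk => ⟨⟨k, Nat.lt_succ_of_le (hs hk)⟩, rfl⟩

namespace ContainsPathPow

variable {n r : ℕ} {G : SimpleGraph (Fin (n + 1))} {S : Set (Fin (n + 1))} {i : Fin (n + 1)}

lemma preimage_val_subset_neighborSet (hG : ContainsPathPow G r) {s : Set ℕ}
    (hs : ∀ k ∈ s, k ≠ i ∧ k ≤ i + r ∧ (i : ℕ) ≤ k + r) :
    Fin.val ⁻¹' s ⊆ G.neighborSet i := fun j hj => by
  obtain ⟨hji, h1, h2⟩ := hs j hj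
  exact hG i j (fun h => hji (h ▸ rfl)) h2 h1

lemma exists_mem_of_ncard_le (hG : ContainsPathPow G r) (hS : ¬ rReachable G r S) (hi : i ∈ S)
    {s : Set ℕ} (hsn : s ⊆ Set.Iic n) (hs : ∀ k ∈ s, k ≠ i ∧ k ≤ i + r ∧ (i : ℕ) ≤ k + r)
    (hr : r ≤ s.ncard) : ∃ j ∈ S, (j : ℕ) ∈ s := by
  have h := ncard_lt_add_ncard_inter_of_not_rReachable hS hi
    (hG.preimage_val_subset_neighborSet hs)
  rw [Fin.ncard_preimage_val hsn] at h
  obtain ⟨j, hjs, hjS⟩ := Set.nonempty_of_ncard_ne_zero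
    (show (Fin.val ⁻¹' s ∩ S).ncard ≠ 0 by omega)
  exact ⟨j, hjS, hjs⟩

lemma exists_mem_lt (hG : ContainsPathPow G r) (hS : ¬ rReachable G r S) (hi : i ∈ S)
    (hri : r ≤ i) : ∃ j ∈ S, j < i := by
  obtain ⟨j, hjS, hj⟩ := hG.exists_mem_of_ncard_le hS hi (s := Set.Ico (i - r) i)
    (fun k hk => by simp only [Set.mem_Ico, Set.mem_Iic] at hk ⊢; omega)
    (fun k hk => by simp only [Set.mem_Ico] at hk; omega) (by simp; omega)
  exact ⟨j, hjS, Fin.lt_def.2 hj.2⟩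

lemma exists_mem_gt (hG : ContainsPathPow G r) (hS : ¬ rReachable G r S) (hi : i ∈ S)
    (hin : (i : ℕ) + r ≤ n) : ∃ j ∈ S, i < j ∧ (j : ℕ) ≤ i + r := by
  obtain ⟨j, hjS, hj⟩ := hG.exists_mem_of_ncard_le hS hi (s := Set.Ioc i (i + r))
    (fun k hk => by simp only [Set.mem_Ioc, Set.mem_Iic] at hk ⊢; omega)
    (fun k hk => by simp only [Set.mem_Ioc] at hk; omega) (by simp)
  exact ⟨j, hjS, Fin.lt_def.2 hj.1, hj.2⟩

/-- The least element of `S` lies below `r`, and from there `S` advances in steps of at most `r`. -/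
lemma exists_mem_between (hG : ContainsPathPow G r) (hS : ¬ rReachable G r S)
    (hne : S.Nonempty) (hrn : 2 * r ≤ n + 1) : ∃ j ∈ S, r ≤ j ∧ (j : ℕ) < 2 * r := by
  have hr : r ≠ 0 := by
    rintro rfl
    obtain ⟨i, hi⟩ := hne
    exact hS ⟨i, hi, Nat.zero_le _⟩
  obtain ⟨m, hmS, hmin⟩ := Set.exists_min_image S id S.toFinite hne
  have hmr : (m : ℕ) < r := by
    by_contra! h
    obtain ⟨j, hjS, hjm⟩ := hG.exists_mem_lt hS hmS h
    exact (hmin j hjS).not_gt hjm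
  obtain ⟨s, ⟨hsS, hsr⟩, hsmax⟩ := Set.exists_max_image {j ∈ S | (j : ℕ) < r} id
    (Set.toFinite _) ⟨m, hmS, hmr⟩
  obtain ⟨j, hjS, hsj, hjs⟩ := hG.exists_mem_gt hS hsS (by omega)
  refine ⟨j, hjS, ?_, by omega⟩
  by_contra! hjr
  exact (hsmax j ⟨hjS, hjr⟩).not_gt hsj

lemma lt_ncard_inter (hG : ContainsPathPow G r) (hS : ¬ rReachable G r S) (hi : i ∈ S)
    (hri : r ≤ i) (hin : (i : ℕ) + r ≤ n) :
    r < (S ∩ Fin.val ⁻¹' (Set.Ico (i - r) i ∪ Set.Ioc i (i + r))).ncard := by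
  have h := ncard_lt_add_ncard_inter_of_not_rReachable hS hi
    (hG.preimage_val_subset_neighborSet (i := i) (s := Set.Ico (i - r) i ∪ Set.Ioc i (i + r))
      (fun k hk => by simp only [Set.mem_union, Set.mem_Ico, Set.mem_Ioc] at hk; omega))
  have hdisj : Disjoint (Set.Ico (i - r) (i : ℕ)) (Set.Ioc i (i + r)) :=
    Set.disjoint_left.2 fun k h1 h2 => by simp only [Set.mem_Ico, Set.mem_Ioc] at h1 h2; omega
  rw [Fin.ncard_preimage_val (fun k hk => by
    simp only [Set.mem_union, Set.mem_Ico, Set.mem_Ioc, Set.mem_Iic] at hk ⊢; omega),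
    Set.ncard_union_eq hdisj, Set.ncard_Ico_nat, Set.ncard_Ioc_nat, Set.inter_comm] at h
  omega

end ContainsPathPow

namespace ContainsPathPow

variable {n r : ℕ} {G : SimpleGraph (Fin (n + 1))}

/-- The `A`-neighbours of `u` and the `B`-neighbours of `v` within distance `r` are disjoint, more
than `r` each, and all lie in the `2 r` positions `[u - r, u) ∪ (v, v + r]`. -/
lemma false_of_consecutive_mem (hG : ContainsPathPow G r) {A B : Set (Fin (n + 1))}
    (hA : ¬ rReachable G r A) (hB : ¬ rReachable G r B) (hAB : Disjoint A B)
    {u v : Fin (n + 1)} (hu : u ∈ A) (hv : v ∈ B) (huv : u < v)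
    (hgap : ∀ w, u < w → w < v → w ∉ A ∧ w ∉ B) (hru : r ≤ u) (hvn : (v : ℕ) + r ≤ n) :
    False := by
  set X := A ∩ Fin.val ⁻¹' (Set.Ico (u - r) u ∪ Set.Ioc u (u + r))
  set Y := B ∩ Fin.val ⁻¹' (Set.Ico (v - r) v ∪ Set.Ioc v (v + r))
  have huv' : (u : ℕ) < v := huv
  have hX : r < X.ncard := hG.lt_ncard_inter hA hu hru (by omega)
  have hY : r < Y.ncard := hG.lt_ncard_inter hB hv (by omega) hvn
  have hXY : X ∪ Y ⊆ Fin.val ⁻¹' (Set.Ico (u - r) u ∪ Set.Ioc v (v + r)) := by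
    rintro w (⟨hwA, hw⟩ | ⟨hwB, hw⟩)
    · have hwv : w ≠ v := fun h => hAB.ne_of_mem hwA hv h
      have hgap' : u < w → v ≤ w := fun h => not_lt.1 fun h' => (hgap w h h').1 hwA
      simp only [Set.mem_preimage, Set.mem_union, Set.mem_Ico, Set.mem_Ioc, Fin.lt_def,
        Fin.le_def, ne_eq, Fin.ext_iff] at hw hwv hgap' ⊢
      omega
    · have hwu : w ≠ u := fun h => hAB.ne_of_mem hu hwB h.symm
      have hgap' : w < v → w ≤ u := fun h => not_lt.1 fun h' => (hgap w h' h).2 hwB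
      simp only [Set.mem_preimage, Set.mem_union, Set.mem_Ico, Set.mem_Ioc, Fin.lt_def,
        Fin.le_def, ne_eq, Fin.ext_iff] at hw hwu hgap' ⊢
      omega
  have hdisj : Disjoint (Set.Ico (u - r) (u : ℕ)) (Set.Ioc v (v + r)) :=
    Set.disjoint_left.2 fun k h1 h2 => by simp only [Set.mem_Ico, Set.mem_Ioc] at h1 h2; omega
  have hK : (Fin.val ⁻¹' (Set.Ico (u - r) u ∪ Set.Ioc v (v + r)) : Set (Fin (n + 1))).ncard
      = 2 * r := by
    rw [Fin.ncard_preimage_val (fun k hk => by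
      simp only [Set.mem_union, Set.mem_Ico, Set.mem_Ioc, Set.mem_Iic] at hk ⊢; omega),
      Set.ncard_union_eq hdisj, Set.ncard_Ico_nat, Set.ncard_Ioc_nat]
    omega
  have := Set.ncard_union_eq (hAB.mono Set.inter_subset_left Set.inter_subset_left)
    (s := X) (t := Y)
  have := Set.ncard_le_ncard hXY
  omega

theorem rRobust (hG : ContainsPathPow G r) (hrn : 3 * r ≤ n + 1) : rRobust G r := by
  intro A B hA hB hAB
  by_contra! h
  obtain ⟨hA', hB'⟩ := h
  obtain ⟨a, haA, hra, ha⟩ := hG.exists_mem_between hA' hA (by omega)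
  obtain ⟨b, hbB, hrb, hb⟩ := hG.exists_mem_between hB' hB (by omega)
  wlog hab : a < b generalizing A B a b
  · exact this B A hB hA hAB.symm hB' hA' b hbB hrb hb a haA hra ha
      ((le_of_not_gt hab).lt_of_ne fun h => hAB.ne_of_mem haA hbB h.symm)
  obtain ⟨u, huA, v, hvB, hau, huv, hvb, hgap⟩ := exists_consecutive_mem haA hbB hab
  exact hG.false_of_consecutive_mem hA' hB' hAB huA hvB huv hgap (hra.trans hau)
    (by have : (v : ℕ) ≤ b := hvb; omega)

end ContainsPathPow

section geomGraph

variable {n r : ℕ} {x : Fin (n + 1) → ℝ} {ρ : ℝ}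

lemma geomGraph_adj {i j : Fin (n + 1)} :
    (geomGraph x ρ).Adj i j ↔ i ≠ j ∧ |x i - x j| ≤ ρ := by
  rw [geomGraph, SimpleGraph.fromRel_adj, abs_sub_comm (x j), or_self]

/-- Deleting the fewer than `r` vertices strictly between `i` and `j` separates `i` from `j`
unless some edge jumps over the gap, and such an edge forces `x j - x i ≤ ρ`. -/
lemma sub_le_of_rConnected (hx : Monotone x) (h : rConnected (geomGraph x ρ) r)
    {i j : Fin (n + 1)} (hij : i < j) (hjr : (j : ℕ) ≤ i + r) : x j - x i ≤ ρ := by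
  set T : Set (Fin (n + 1)) := Fin.val ⁻¹' Set.Ioo (i : ℕ) j
  have hT : T.ncard < r := by
    rw [Fin.ncard_preimage_val fun k hk => Set.mem_Iic.2 (hk.2.le.trans (Nat.lt_succ_iff.1 j.2)),
      Set.ncard_Ioo_nat]
    omega
  have hi : i ∈ Tᶜ := fun hk => (lt_irrefl _ hk.1)
  have hj : j ∈ Tᶜ := fun hk => (lt_irrefl _ hk.2)
  obtain ⟨p⟩ := (h.2 T hT).preconnected ⟨i, hi⟩ ⟨j, hj⟩
  obtain ⟨d, -, hfst, hsnd⟩ := p.exists_boundary_dart {w | w.1 ≤ i} (le_refl i) (not_le.2 hij)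
  have hjs : j ≤ d.snd.1 := by
    by_contra! hlt
    exact d.snd.2 ⟨not_le.1 hsnd, hlt⟩
  have hadj : |x d.fst.1 - x d.snd.1| ≤ ρ := (geomGraph_adj.1 d.adj).2
  have := hx hfst
  have := hx hjs
  linarith [abs_sub_le_iff.1 hadj]

lemma containsPathPow_of_rConnected (hρ : 0 ≤ ρ) (hx : Monotone x)
    (h : rConnected (geomGraph x ρ) r) : ContainsPathPow (geomGraph x ρ) r := by
  intro i j hij hi hj
  refine geomGraph_adj.2 ⟨hij, abs_sub_le_iff.2 ?_⟩
  rcases hij.lt_or_gt with hlt | hlt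
  · exact ⟨by linarith [hx hlt.le], sub_le_of_rConnected hx h hlt hj⟩
  · exact ⟨sub_le_of_rConnected hx h hlt hi, by linarith [hx hlt.le]⟩

lemma ContainsPathPow.three_mul_lt (hρ : 0 ≤ ρ) (hG : ContainsPathPow (geomGraph x ρ) r)
    (hspread : 3 * ρ < x (Fin.last n) - x 0) : 3 * r < n := by
  have hstep : ∀ i j : Fin (n + 1), (j : ℕ) ≤ i + r → (i : ℕ) ≤ j + r → x j - x i ≤ ρ := by
    intro i j hj hi
    rcases eq_or_ne i j with rfl | hij
    · simpa using hρ
    · exact (abs_sub_le_iff.1 (geomGraph_adj.1 (hG i j hij hi hj)).2).2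
  by_contra! hn
  let p : Fin (n + 1) := ⟨min r n, by omega⟩
  let q : Fin (n + 1) := ⟨min (2 * r) n, by omega⟩
  have h1 := hstep 0 p (by simp [p]) (by simp)
  have h2 := hstep p q (by simp only [p, q]; omega) (by simp only [p, q]; omega)
  have h3 := hstep q (Fin.last n) (by simp only [q, Fin.val_last]; omega)
    (by simp only [q, Fin.val_last]; omega)
  linarith

end geomGraph

theorem stmt12 (n : ℕ) (x : Fin (n + 1) → ℝ) (ρ : ℝ) (hρ : 0 < ρ)
    (hx : Monotone x) (hspread : 3 * ρ < x (Fin.last n) - x 0) (r : ℕ) :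
    rConnected (geomGraph x ρ) r ↔ rRobust (geomGraph x ρ) r := by
  constructor
  · intro h
    have hG := containsPathPow_of_rConnected hρ.le hx h
    exact hG.rRobust (by have := hG.three_mul_lt hρ.le hspread; omega)
  · intro h
    have hn : n ≠ 0 := by
      rintro rfl
      simp only [Fin.last_zero, sub_self] at hspread
      linarith
    exact h.rConnected (by rw [Fintype.card_fin]; omega)
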